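/- Any class of vertex-coloured graphs (with colours from a finite set C) of bounded shrub-depth is well-quasi-ordered under the colour-preserving induced subgraph relation. -/

import Mathlib

/-!
A graph in `TM(d,m)` is recovered from the leaves of its tree-model, labelled by their colours,
together with the signature at the distances `ℓ ≤ d`, which takes only finitely many values. So a
map between leaf sets preserving labels and the depths of last common ancestors is an induced
embedding as soon as the two signatures agree. Such labelled leaf sets are well-quasi-ordered, by
induction on the depth: grouping the leaves by the child of the root above them turns a leaf set of
depth `d + 1` into a finite family of leaf sets of depth `d`, and by Higman's lemma finite
families over a well-quasi-order are well-quasi-ordered under injective domination.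
-/

/-- Length of the longest common prefix of `f` and `g` (as strings of length `d`). -/
def prefLen {d : ℕ} (f g : Fin d → ℕ) : ℕ :=
  Nat.findGreatest (fun k => ∀ i : Fin d, (i : ℕ) < k → f i = g i) d

/-- A tree-model of `m` colours and depth `d` for the graph `G`:
a rooted tree of uniform root-to-leaf distance `d` whose leaves are exactly `V(G)`
(encoded by the injective map `f` sending each leaf to its root-to-leaf address),
a colouring of the leaves by `m` colours, and a symmetric signature `S` such that
two distinct vertices `u,v` are adjacent iff `(col u, col v, ℓ) ∈ S`, where `2ℓ`
is the tree-distance between `u` and `v` in the tree. -/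
structure TreeModel {V : Type} (G : SimpleGraph V) (d m : ℕ) where
  f : V → Fin d → ℕ
  inj : Function.Injective f
  col : V → Fin m
  S : Fin m → Fin m → ℕ → Prop
  symm : ∀ i j l, S i j l → S j i l
  adj : ∀ u v : V, u ≠ v →
    (G.Adj u v ↔ S (col u) (col v) (d - prefLen (f u) (f v)))

/-- `G ∈ TM(d,m)`. -/
def InTM (d m : ℕ) {V : Type} (G : SimpleGraph V) : Prop :=
  Nonempty (TreeModel G d m)

section PrefLen

variable {d : ℕ}

lemma prefLen_le (f g : Fin d → ℕ) : prefLen f g ≤ d :=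
  Nat.findGreatest_le d

lemma apply_eq_of_lt_prefLen {f g : Fin d → ℕ} {i : Fin d} (hi : (i : ℕ) < prefLen f g) :
    f i = g i := by
  unfold prefLen at hi
  exact Nat.findGreatest_spec (P := fun k => ∀ i : Fin d, (i : ℕ) < k → f i = g i)
    (Nat.zero_le d) (fun _ h => absurd h (Nat.not_lt_zero _)) i hi

lemma le_prefLen_iff {f g : Fin d → ℕ} {k : ℕ} (hk : k ≤ d) :
    k ≤ prefLen f g ↔ ∀ i : Fin d, (i : ℕ) < k → f i = g i :=
  ⟨fun h _ hi => apply_eq_of_lt_prefLen (hi.trans_le h), fun h => Nat.le_findGreatest hk h⟩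

lemma prefLen_self (f : Fin d → ℕ) : prefLen f f = d :=
  (prefLen_le f f).antisymm ((le_prefLen_iff le_rfl).2 fun _ _ => rfl)

lemma eq_of_prefLen_eq {f g : Fin d → ℕ} (h : prefLen f g = d) : f = g :=
  funext fun i => apply_eq_of_lt_prefLen (h.symm ▸ i.2)

lemma injective_of_prefLen_eq {V V' : Type*} {f : V → Fin d → ℕ} (hf : Function.Injective f)
    {g : V' → Fin d → ℕ} {φ : V → V'}
    (h : ∀ u v, prefLen (g (φ u)) (g (φ v)) = prefLen (f u) (f v)) : Function.Injective φ :=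
  fun u v huv => hf <| eq_of_prefLen_eq <| (h u v).symm.trans <| huv ▸ prefLen_self _

lemma prefLen_eq_zero_of_ne {f g : Fin (d + 1) → ℕ} (h : f 0 ≠ g 0) : prefLen f g = 0 := by
  by_contra hpos
  exact h (apply_eq_of_lt_prefLen (Nat.pos_of_ne_zero hpos))

lemma prefLen_eq_prefLen_tail_add_one {f g : Fin (d + 1) → ℕ} (h : f 0 = g 0) :
    prefLen f g = prefLen (Fin.tail f) (Fin.tail g) + 1 := by
  have hf := prefLen_le f g
  have ht := prefLen_le (Fin.tail f) (Fin.tail g)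
  refine le_antisymm ?_ ((le_prefLen_iff (by omega)).2 fun i hi => ?_)
  · suffices prefLen f g - 1 ≤ prefLen (Fin.tail f) (Fin.tail g) by omega
    exact (le_prefLen_iff (by omega)).2 fun i hi =>
      apply_eq_of_lt_prefLen (i := i.succ) (by simp only [Fin.val_succ]; omega)
  · induction i using Fin.cases with
    | zero => exact h
    | succ i =>
      simp only [Fin.val_succ] at hi
      exact apply_eq_of_lt_prefLen (f := Fin.tail f) (g := Fin.tail g) (by omega)

end PrefLen

theorem List.SublistForall₂.exists_injective {α β : Type*} {R : α → β → Prop} {l₁ : List α}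
    {l₂ : List β} (h : List.SublistForall₂ R l₁ l₂) :
    ∃ g : Fin l₁.length → Fin l₂.length,
      Function.Injective g ∧ ∀ k, R (l₁.get k) (l₂.get (g k)) := by
  induction h with
  | nil => exact ⟨Fin.elim0, fun k => k.elim0, fun k => k.elim0⟩
  | cons hr _ ih =>
    obtain ⟨g, hg, hR⟩ := ih
    refine ⟨Fin.cons 0 (Fin.succ ∘ g),
      Fin.cons_injective_iff.2 ⟨?_, (Fin.succ_injective _).comp hg⟩, Fin.cases hr hR⟩
    rintro ⟨k, hk⟩
    exact Fin.succ_ne_zero _ hk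
  | cons_right _ ih =>
    obtain ⟨g, hg, hR⟩ := ih
    exact ⟨Fin.succ ∘ g, (Fin.succ_injective _).comp hg, hR⟩

theorem WellQuasiOrdered.exists_injective_of_finite {α : Type*} {r : α → α → Prop}
    [IsPreorder α r] (hr : WellQuasiOrdered r) {ι : ℕ → Type*} [∀ n, Finite (ι n)]
    (x : ∀ n, ι n → α) :
    ∃ i j, i < j ∧ ∃ ψ : ι i → ι j, Function.Injective ψ ∧ ∀ k, r (x i k) (x j (ψ k)) := by
  let e n := Finite.equivFin (ι n)
  let l n : List α := List.ofFn (x n ∘ (e n).symm)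
  have higman := (Set.partiallyWellOrderedOn_univ_iff.2 hr).partiallyWellOrderedOn_sublistForall₂ r
  obtain ⟨i, j, hij, hl⟩ := higman.exists_lt (f := l) fun _ _ _ => Set.mem_univ _
  obtain ⟨g, hg, hR⟩ := hl.exists_injective
  have hi : Nat.card (ι i) = (l i).length := by simp [l]
  have hj : (l j).length = Nat.card (ι j) := by simp [l]
  refine ⟨i, j, hij, fun k => (e j).symm (Fin.cast hj (g (Fin.cast hi (e i k)))), ?_, fun k => ?_⟩
  · exact (e j).symm.injective.comp <| (Fin.cast_injective _).comp <|
      hg.comp <| (Fin.cast_injective _).comp (e i).injective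
  · have := hR (Fin.cast hi (e i k))
    simp only [l, List.get_ofFn, Function.comp_apply, Fin.cast_cast, Fin.cast_eq_self,
      Equiv.symm_apply_apply] at this
    exact this

/-- The leaves of a labelled rooted tree of depth `d`, each given by its root-to-leaf address.
The relation `Embeds` is the embedding of such trees restricted to their leaves: it preserves
labels and the depth of the last common ancestor of any two leaves. -/
structure LabelledLeaves (L : Type) (d : ℕ) : Type 1 where
  V : Type
  [finite : Finite V]
  addr : V → Fin d → ℕ
  label : V → L

attribute [instance] LabelledLeaves.finite

namespace LabelledLeaves

variable {L : Type} {d : ℕ}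

def Embeds (S T : LabelledLeaves L d) : Prop :=
  ∃ φ : S.V → T.V, (∀ v, T.label (φ v) = S.label v) ∧
    ∀ u v, prefLen (T.addr (φ u)) (T.addr (φ v)) = prefLen (S.addr u) (S.addr v)

instance : IsPreorder (LabelledLeaves L d) Embeds where
  refl _ := ⟨id, fun _ => rfl, fun _ _ => rfl⟩
  trans _ _ _ := fun ⟨φ, hφl, hφp⟩ ⟨χ, hχl, hχp⟩ =>
    ⟨χ ∘ φ, fun v => (hχl _).trans (hφl v), fun u v => (hχp _ _).trans (hφp u v)⟩

abbrev children (S : LabelledLeaves L (d + 1)) : Set ℕ :=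
  Set.range fun v => S.addr v 0

def subtree (S : LabelledLeaves L (d + 1)) (k : ℕ) : LabelledLeaves L d where
  V := {v : S.V // S.addr v 0 = k}
  addr v := Fin.tail (S.addr v)
  label v := S.label v

theorem embeds_of_embeds_subtree {S T : LabelledLeaves L (d + 1)}
    (ψ : S.children → T.children) (hψ : Function.Injective ψ)
    (h : ∀ k : S.children, Embeds (S.subtree k) (T.subtree (ψ k))) : Embeds S T := by
  choose φ hφl hφp using h
  obtain ⟨Φ, hΦ⟩ : ∃ Φ : S.V → T.V,
      ∀ (k : S.children) v (hv : S.addr v 0 = k), Φ v = (φ k ⟨v, hv⟩).1 :=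
    ⟨fun v => (φ ⟨_, v, rfl⟩ ⟨v, rfl⟩).1, by
      rintro ⟨k, hk⟩ v (rfl : S.addr v 0 = k)
      rfl⟩
  have head_Φ (k : S.children) v (hv : S.addr v 0 = k) : T.addr (Φ v) 0 = ψ k :=
    hΦ k v hv ▸ (φ k _).2
  refine ⟨Φ, fun v => hΦ ⟨_, v, rfl⟩ v rfl ▸ hφl _ _, fun u v => ?_⟩
  by_cases huv : S.addr u 0 = S.addr v 0
  · let k : S.children := ⟨_, u, rfl⟩
    rw [prefLen_eq_prefLen_tail_add_one huv, prefLen_eq_prefLen_tail_add_one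
      ((head_Φ k u rfl).trans (head_Φ k v huv.symm).symm), hΦ k u rfl, hΦ k v huv.symm]
    exact congrArg (· + 1) (hφp k _ _)
  · rw [prefLen_eq_zero_of_ne huv, prefLen_eq_zero_of_ne]
    rw [head_Φ ⟨_, u, rfl⟩ u rfl, head_Φ ⟨_, v, rfl⟩ v rfl]
    exact fun h => huv (congrArg Subtype.val (hψ (Subtype.ext h)))

theorem wellQuasiOrdered_embeds_zero [Finite L] : WellQuasiOrdered (@Embeds L 0) := by
  intro S
  obtain ⟨i, j, hij, hrange⟩ :=
    Finite.wellQuasiOrdered (· = ·) (fun n => Set.range (S n).label)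
  refine ⟨i, j, hij, ?_⟩
  have (v : (S i).V) : ∃ w, (S j).label w = (S i).label v := by
    rw [← Set.mem_range, ← hrange]
    exact ⟨v, rfl⟩
  choose φ hφ using this
  exact ⟨φ, hφ, fun u v => by simp only [Nat.le_zero.1 (prefLen_le _ _)]⟩

theorem wellQuasiOrdered_embeds (L : Type) [Finite L] :
    ∀ d, WellQuasiOrdered (@Embeds L d)
  | 0 => wellQuasiOrdered_embeds_zero
  | d + 1 => fun S => by
    obtain ⟨i, j, hij, ψ, hψ, h⟩ := (wellQuasiOrdered_embeds L d).exists_injective_of_finite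
      fun n (k : (S n).children) => (S n).subtree k
    exact ⟨i, j, hij, embeds_of_embeds_subtree ψ hψ h⟩

end LabelledLeaves

namespace TreeModel

variable {V V' : Type} {G : SimpleGraph V} {G' : SimpleGraph V'} {d m : ℕ}

/-- Only the values `ℓ ≤ d` of the signature are ever read by `TreeModel.adj`. -/
def signature (M : TreeModel G d m) : Fin m → Fin m → Fin (d + 1) → Prop :=
  fun a b ℓ => M.S a b ℓ

def leaves [Finite V] {C : Type} (M : TreeModel G d m) (c : V → C) :
    LabelledLeaves (Fin m × C) d where
  V := V
  addr := M.f
  label v := (M.col v, c v)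

def embedding (M : TreeModel G d m) (M' : TreeModel G' d m) (hS : M.signature = M'.signature)
    (φ : V → V') (hcol : ∀ v, M'.col (φ v) = M.col v)
    (hpref : ∀ u v, prefLen (M'.f (φ u)) (M'.f (φ v)) = prefLen (M.f u) (M.f v)) : G ↪g G' where
  toFun := φ
  inj' := injective_of_prefLen_eq M.inj hpref
  map_rel_iff' {u v} := by
    by_cases huv : u = v
    · subst huv
      exact iff_of_false G'.irrefl G.irrefl
    have hφuv : φ u ≠ φ v := (injective_of_prefLen_eq M.inj hpref).ne huv
    have hℓ : d - prefLen (M.f u) (M.f v) < d + 1 := by omega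
    show G'.Adj (φ u) (φ v) ↔ G.Adj u v
    rw [M.adj u v huv, M'.adj _ _ hφuv, hcol, hcol, hpref]
    exact (congrFun (congrFun (congrFun hS _) _) ⟨_, hℓ⟩).symm.to_iff

end TreeModel

/-- Any class of `C`-coloured graphs of bounded shrub-depth is well-quasi-ordered under
the colour-preserving induced subgraph relation: every infinite sequence of coloured
graphs from `TM(d,m)` contains indices `i < j` with a colour-preserving induced-subgraph
embedding of the `i`-th graph into the `j`-th. -/
theorem stmt_16 (d m : ℕ) (C : Type) [Fintype C]
    (V : ℕ → Type) [∀ n, Fintype (V n)]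
    (G : ∀ n, SimpleGraph (V n)) (col : ∀ n, V n → C)
    (h : ∀ n, InTM d m (G n)) :
    ∃ i j : ℕ, i < j ∧ ∃ φ : G i ↪g G j, ∀ v, col j (φ v) = col i v := by
  let M n : TreeModel (G n) d m := (h n).some
  obtain ⟨i, j, hij, ⟨φ, hlabel, hpref⟩, hS⟩ :=
    (LabelledLeaves.wellQuasiOrdered_embeds (Fin m × C) d).prod
      (Finite.wellQuasiOrdered (· = ·)) fun n => ((M n).leaves (col n), (M n).signature)
  refine ⟨i, j, hij, (M i).embedding (M j) hS φ (fun v => ?_) hpref, fun v => ?_⟩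
  exacts [congrArg Prod.fst (hlabel v), congrArg Prod.snd (hlabel v)]
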